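/- arXiv:2510.05994 — 2 statements merged into one kernel-verified Lean document; each statement's English description precedes it below -/
import Mathlib

section
/- Let X be a separable Banach space with Borel σ-algebra, μ_pr a probability measure on X, and let Φ, Φ̃_N : X → ℝ (N ∈ ℕ) be measurable functions. Assume: (i) for every ε > 0 there exists M = M(ε) ∈ ℝ such that Φ(θ) ≥ M − ε‖θ‖² and Φ̃_N(θ) ≥ M − ε‖θ‖² for all θ ∈ X and all N; (ii) for every ε > 0 there exists K₁ = K₁(ε) > 0 such that |Φ(θ) − Φ̃_N(θ)| ≤ K₁ exp(ε‖θ‖²) ψ(N) for all θ ∈ X and all N, where ψ : ℕ → [0,∞) satisfies ψ(N) → 0; (iii) there exists ε₀ > 0 such that ∫_X exp(ε‖θ‖²) dμ_pr(θ) < ∞ for all ε ∈ (0, ε₀) (as holds for Gaussian μ_pr by Fernique's theorem). Set Z = ∫ exp(−Φ) dμ_pr, Z̃_N = ∫ exp(−Φ̃_N) dμ_pr, and define probability measures μ = Z^{−1} e^{−Φ}·μ_pr and μ̃_N = Z̃_N^{−1} e^{−Φ̃_N}·μ_pr. Then there exists a constant C > 0, independent of N, such that the Hellinger distance satisfies d_Hell(μ,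 μ̃_N) := ( ½ ∫_X ( √(Z^{−1} e^{−Φ(θ)}) − √(Z̃_N^{−1} e^{−Φ̃_N(θ)}) )² dμ_pr(θ) )^{1/2} ≤ C ψ(N). -/
open MeasureTheory Real Filter Topology

lemma stmt7_exp_lipschitz (a b : ℝ) :
    |Real.exp a - Real.exp b| ≤ Real.exp (max a b) * |a - b| := by
  rcases le_total b a with h | h
  · rw [abs_of_nonneg (sub_nonneg.2 (Real.exp_le_exp.2 h)),
      abs_of_nonneg (sub_nonneg.2 h), max_eq_left h]
    have h1 : b - a + 1 ≤ Real.exp (b - a) := Real.add_one_le_exp _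
    have h2 : Real.exp a * Real.exp (b - a) = Real.exp b := by
      rw [← Real.exp_add]; ring_nf
    nlinarith [Real.exp_pos a]
  · rw [abs_sub_comm, abs_sub_comm a b, max_comm]
    rw [abs_of_nonneg (sub_nonneg.2 (Real.exp_le_exp.2 h)),
      abs_of_nonneg (sub_nonneg.2 h), max_eq_left h]
    have h1 : a - b + 1 ≤ Real.exp (a - b) := Real.add_one_le_exp _
    have h2 : Real.exp b * Real.exp (a - b) = Real.exp a := by
      rw [← Real.exp_add]; ring_nf
    nlinarith [Real.exp_pos b]

lemma stmt7_sqrt_lipschitz {a b c : ℝ} (hc : 0 < c) (ha : c ≤ a) (hb : c ≤ b) :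
    |Real.sqrt a - Real.sqrt b| ≤ |a - b| / (2 * Real.sqrt c) := by
  have hsc : 0 < Real.sqrt c := Real.sqrt_pos.2 hc
  rw [le_div_iff₀ (by positivity)]
  have hsum : 2 * Real.sqrt c ≤ Real.sqrt a + Real.sqrt b := by
    have h1 := Real.sqrt_le_sqrt ha
    have h2 := Real.sqrt_le_sqrt hb
    linarith
  have key : |a - b| = |Real.sqrt a - Real.sqrt b| * (Real.sqrt a + Real.sqrt b) := by
    rw [← abs_of_nonneg (show (0:ℝ) ≤ Real.sqrt a + Real.sqrt b by positivity), ← abs_mul]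
    congr 1
    have h1 : Real.sqrt a * Real.sqrt a = a := Real.mul_self_sqrt (hc.le.trans ha)
    have h2 : Real.sqrt b * Real.sqrt b = b := Real.mul_self_sqrt (hc.le.trans hb)
    nlinarith
  rw [key]
  exact mul_le_mul_of_nonneg_left hsum (abs_nonneg _)

lemma stmt7_integral_pos {X : Type*} [MeasurableSpace X] (μ : Measure X)
    [IsProbabilityMeasure μ] {f : X → ℝ} (hf : Integrable f μ) (hpos : ∀ x, 0 < f x) :
    0 < ∫ x, f x ∂μ := by
  rw [MeasureTheory.integral_pos_iff_support_of_nonneg (fun x => (hpos x).le) hf]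
  have : Function.support f = Set.univ := Set.eq_univ_of_forall fun x => (hpos x).ne'
  simp [this]

lemma stmt7_exp_sq (x : ℝ) : Real.exp x ^ 2 = Real.exp (2 * x) := by
  rw [sq, ← Real.exp_add]; ring_nf

set_option maxHeartbeats 1000000 in
/-- **Stuart's approximation theorem, Hellinger bound.** Let `X` be a
separable Banach space, `μ_pr` a probability measure on `X`, and `Φ, Φ̃_N : X → ℝ`
measurable potentials satisfying the lower bound (i), the approximation bound (ii)
with rate `ψ(N) → 0`, and the exponential integrability (iii). Then the Hellinger
distance between the posteriors `μ = Z⁻¹ e^{−Φ}·μ_pr` and `μ̃_N = Z̃_N⁻¹ e^{−Φ̃_N}·μ_pr`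
satisfies `d_Hell(μ, μ̃_N) ≤ C ψ(N)` with `C` independent of `N`. -/
theorem stmt_7 {X : Type*} [NormedAddCommGroup X] [NormedSpace ℝ X] [CompleteSpace X]
    [TopologicalSpace.SeparableSpace X] [MeasurableSpace X] [BorelSpace X]
    (μpr : Measure X) [IsProbabilityMeasure μpr]
    (Φ : X → ℝ) (Φt : ℕ → X → ℝ)
    (hΦm : Measurable Φ) (hΦtm : ∀ N, Measurable (Φt N))
    (ψ : ℕ → ℝ) (hψ0 : ∀ N, 0 ≤ ψ N) (hψ : Tendsto ψ atTop (𝓝 0))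
    (hlow : ∀ ε : ℝ, 0 < ε → ∃ M : ℝ, ∀ θ : X,
      M - ε * ‖θ‖ ^ 2 ≤ Φ θ ∧ ∀ N, M - ε * ‖θ‖ ^ 2 ≤ Φt N θ)
    (happrox : ∀ ε : ℝ, 0 < ε → ∃ K₁ : ℝ, 0 < K₁ ∧ ∀ N, ∀ θ : X,
      |Φ θ - Φt N θ| ≤ K₁ * Real.exp (ε * ‖θ‖ ^ 2) * ψ N)
    (hint : ∃ ε₀ : ℝ, 0 < ε₀ ∧ ∀ ε : ℝ, 0 < ε → ε < ε₀ →
      Integrable (fun θ => Real.exp (ε * ‖θ‖ ^ 2)) μpr) :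
    ∃ C : ℝ, 0 < C ∧ ∀ N,
      Real.sqrt ((1 / 2) * ∫ θ,
          (Real.sqrt ((∫ t, Real.exp (-Φ t) ∂μpr)⁻¹ * Real.exp (-Φ θ)) -
           Real.sqrt ((∫ t, Real.exp (-Φt N t) ∂μpr)⁻¹ * Real.exp (-Φt N θ))) ^ 2 ∂μpr)
        ≤ C * ψ N := by
  obtain ⟨ε₀, hε₀, hIntAll⟩ := hint
  set ε : ℝ := ε₀ / 4 with hεdef
  have hε : 0 < ε := by positivity
  have hg1 : Integrable (fun θ => Real.exp (ε * ‖θ‖ ^ 2)) μpr :=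
    hIntAll ε hε (by rw [hεdef]; linarith)
  have hg2 : Integrable (fun θ => Real.exp (2 * ε * ‖θ‖ ^ 2)) μpr :=
    hIntAll (2 * ε) (by positivity) (by rw [hεdef]; linarith)
  have hg3 : Integrable (fun θ => Real.exp (3 * ε * ‖θ‖ ^ 2)) μpr :=
    hIntAll (3 * ε) (by positivity) (by rw [hεdef]; linarith)
  obtain ⟨M, hM⟩ := hlow ε hε
  obtain ⟨K₁, hK₁, hK⟩ := happrox ε hε
  -- ψ is bounded
  obtain ⟨B₀, hB₀⟩ := hψ.bddAbove_range
  set B : ℝ := max B₀ 1 with hBdef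
  have hB : ∀ N, ψ N ≤ B := fun N => le_trans (hB₀ ⟨N, rfl⟩) (le_max_left _ _)
  have hBpos : (0:ℝ) < B := lt_of_lt_of_le one_pos (le_max_right _ _)
  -- basic pointwise bounds
  have hexpΦ : ∀ θ, Real.exp (-Φ θ) ≤ Real.exp (-M) * Real.exp (ε * ‖θ‖ ^ 2) := by
    intro θ
    rw [← Real.exp_add]
    exact Real.exp_le_exp.2 (by linarith [(hM θ).1])
  have hexpΦt : ∀ N θ, Real.exp (-Φt N θ) ≤ Real.exp (-M) * Real.exp (ε * ‖θ‖ ^ 2) := by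
    intro N θ
    rw [← Real.exp_add]
    exact Real.exp_le_exp.2 (by linarith [(hM θ).2 N])
  -- integrability of the unnormalized densities
  have hIΦ : Integrable (fun θ => Real.exp (-Φ θ)) μpr := by
    refine (hg1.const_mul (Real.exp (-M))).mono'
      (hΦm.neg.exp).aestronglyMeasurable (ae_of_all _ fun θ => ?_)
    rw [Real.norm_eq_abs, abs_of_nonneg (Real.exp_pos _).le]
    exact hexpΦ θ
  have hIΦt : ∀ N, Integrable (fun θ => Real.exp (-Φt N θ)) μpr := by
    intro N
    refine (hg1.const_mul (Real.exp (-M))).mono'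
      ((hΦtm N).neg.exp).aestronglyMeasurable (ae_of_all _ fun θ => ?_)
    rw [Real.norm_eq_abs, abs_of_nonneg (Real.exp_pos _).le]
    exact hexpΦt N θ
  set Z : ℝ := ∫ t, Real.exp (-Φ t) ∂μpr with hZdef
  set ZN : ℕ → ℝ := fun N => ∫ t, Real.exp (-Φt N t) ∂μpr with hZNdef
  -- uniform lower bound on Z, ZN
  set h : X → ℝ := fun θ => Real.exp (-Φ θ - K₁ * B * Real.exp (ε * ‖θ‖ ^ 2)) with hhdef
  have hIh : Integrable h μpr := by
    refine hIΦ.mono' ((hΦm.neg.sub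
      (measurable_const.mul ((measurable_norm.pow measurable_const).const_mul ε).exp)).exp).aestronglyMeasurable
      (ae_of_all _ fun θ => ?_)
    rw [Real.norm_eq_abs, abs_of_nonneg (Real.exp_pos _).le]
    refine Real.exp_le_exp.2 ?_
    have : 0 ≤ K₁ * B * Real.exp (ε * ‖θ‖ ^ 2) := by positivity
    linarith
  set z₀ : ℝ := ∫ θ, h θ ∂μpr with hz₀def
  have hz₀ : 0 < z₀ := stmt7_integral_pos μpr hIh fun θ => Real.exp_pos _
  have hhleΦ : ∀ θ, h θ ≤ Real.exp (-Φ θ) := by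
    intro θ
    refine Real.exp_le_exp.2 ?_
    have : 0 ≤ K₁ * B * Real.exp (ε * ‖θ‖ ^ 2) := by positivity
    linarith
  have hZge : z₀ ≤ Z := integral_mono hIh hIΦ hhleΦ
  have hZNge : ∀ N, z₀ ≤ ZN N := by
    intro N
    refine integral_mono hIh (hIΦt N) fun θ => Real.exp_le_exp.2 ?_
    have h1 : Φt N θ - Φ θ ≤ K₁ * Real.exp (ε * ‖θ‖ ^ 2) * ψ N := by
      have := abs_le.1 (hK N θ)
      linarith [this.1]
    have h2 : K₁ * Real.exp (ε * ‖θ‖ ^ 2) * ψ N ≤ K₁ * B * Real.exp (ε * ‖θ‖ ^ 2) := by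
      calc K₁ * Real.exp (ε * ‖θ‖ ^ 2) * ψ N
          ≤ K₁ * Real.exp (ε * ‖θ‖ ^ 2) * B :=
            mul_le_mul_of_nonneg_left (hB N) (by positivity)
        _ = K₁ * B * Real.exp (ε * ‖θ‖ ^ 2) := by ring
    linarith
  have hZpos : 0 < Z := lt_of_lt_of_le hz₀ hZge
  have hZNpos : ∀ N, 0 < ZN N := fun N => lt_of_lt_of_le hz₀ (hZNge N)
  -- upper bounds
  set A₁ : ℝ := ∫ θ, Real.exp (ε * ‖θ‖ ^ 2) ∂μpr with hA₁def
  set A₂ : ℝ := ∫ θ, Real.exp (2 * ε * ‖θ‖ ^ 2) ∂μpr with hA₂def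
  set A₃ : ℝ := ∫ θ, Real.exp (3 * ε * ‖θ‖ ^ 2) ∂μpr with hA₃def
  have hA₁pos : 0 < A₁ := stmt7_integral_pos μpr hg1 fun θ => Real.exp_pos _
  have hA₂pos : 0 < A₂ := stmt7_integral_pos μpr hg2 fun θ => Real.exp_pos _
  have hA₃pos : 0 < A₃ := stmt7_integral_pos μpr hg3 fun θ => Real.exp_pos _
  set Zmax : ℝ := Real.exp (-M) * A₁ with hZmaxdef
  have hZmaxpos : 0 < Zmax := by positivity
  have hZle : Z ≤ Zmax := by
    have := integral_mono hIΦ (hg1.const_mul (Real.exp (-M))) hexpΦ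
    rwa [integral_const_mul] at this
  have hZNle : ∀ N, ZN N ≤ Zmax := by
    intro N
    have := integral_mono (hIΦt N) (hg1.const_mul (Real.exp (-M))) (hexpΦt N)
    rwa [integral_const_mul] at this
  -- |Z - ZN| bound
  have hZdiff : ∀ N, |Z - ZN N| ≤ K₁ * Real.exp (-M) * A₂ * ψ N := by
    intro N
    have hsub : Z - ZN N = ∫ θ, (Real.exp (-Φ θ) - Real.exp (-Φt N θ)) ∂μpr :=
      (integral_sub hIΦ (hIΦt N)).symm
    rw [hsub]
    have h1 : |∫ θ, (Real.exp (-Φ θ) - Real.exp (-Φt N θ)) ∂μpr| ≤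
        ∫ θ, |Real.exp (-Φ θ) - Real.exp (-Φt N θ)| ∂μpr := by
      simpa [Real.norm_eq_abs] using
        norm_integral_le_integral_norm (μ := μpr)
          (f := fun θ => Real.exp (-Φ θ) - Real.exp (-Φt N θ))
    refine h1.trans ?_
    have h2 : ∀ θ, |Real.exp (-Φ θ) - Real.exp (-Φt N θ)| ≤
        (K₁ * Real.exp (-M) * ψ N) * Real.exp (2 * ε * ‖θ‖ ^ 2) := by
      intro θ
      have hlip := stmt7_exp_lipschitz (-Φ θ) (-Φt N θ)
      have hmax : max (-Φ θ) (-Φt N θ) ≤ ε * ‖θ‖ ^ 2 - M :=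
        max_le (by linarith [(hM θ).1]) (by linarith [(hM θ).2 N])
      have habs : |(-Φ θ) - (-Φt N θ)| = |Φ θ - Φt N θ| := by
        rw [abs_sub_comm]; congr 1; ring
      calc |Real.exp (-Φ θ) - Real.exp (-Φt N θ)|
          ≤ Real.exp (max (-Φ θ) (-Φt N θ)) * |(-Φ θ) - (-Φt N θ)| := hlip
        _ ≤ Real.exp (ε * ‖θ‖ ^ 2 - M) * (K₁ * Real.exp (ε * ‖θ‖ ^ 2) * ψ N) := by
            rw [habs]
            exact mul_le_mul (Real.exp_le_exp.2 hmax) (hK N θ) (abs_nonneg _)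
              (Real.exp_pos _).le
        _ = (K₁ * Real.exp (-M) * ψ N) * Real.exp (2 * ε * ‖θ‖ ^ 2) := by
            have e1 : Real.exp (ε * ‖θ‖ ^ 2 - M) =
                Real.exp (-M) * Real.exp (ε * ‖θ‖ ^ 2) := by
              rw [← Real.exp_add]; congr 1; ring
            have e2 : Real.exp (ε * ‖θ‖ ^ 2) * Real.exp (ε * ‖θ‖ ^ 2) =
                Real.exp (2 * ε * ‖θ‖ ^ 2) := by
              rw [← Real.exp_add]; congr 1; ring
            rw [e1, ← e2]; ring
    have h3 : Integrable (fun θ => |Real.exp (-Φ θ) - Real.exp (-Φt N θ)|) μpr :=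
      (hIΦ.sub (hIΦt N)).abs
    have h4 := integral_mono h3 (hg2.const_mul (K₁ * Real.exp (-M) * ψ N)) h2
    rw [integral_const_mul] at h4
    calc ∫ θ, |Real.exp (-Φ θ) - Real.exp (-Φt N θ)| ∂μpr
        ≤ K₁ * Real.exp (-M) * ψ N * A₂ := h4
      _ = K₁ * Real.exp (-M) * A₂ * ψ N := by ring
  -- bound on the difference of inverse square roots of normalizers
  set cD : ℝ := K₁ * Real.exp (-M) * A₂ / (z₀ ^ 2 * (2 * Real.sqrt Zmax⁻¹)) with hcDdef
  have hsZmax : (0:ℝ) < Real.sqrt Zmax⁻¹ := Real.sqrt_pos.2 (by positivity)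
  have hcDpos : 0 < cD := by positivity
  have hD : ∀ N, |Real.sqrt Z⁻¹ - Real.sqrt (ZN N)⁻¹| ≤ cD * ψ N := by
    intro N
    have hinv1 : Zmax⁻¹ ≤ Z⁻¹ := inv_anti₀ hZpos hZle
    have hinv2 : Zmax⁻¹ ≤ (ZN N)⁻¹ := inv_anti₀ (hZNpos N) (hZNle N)
    have h1 := stmt7_sqrt_lipschitz (show (0:ℝ) < Zmax⁻¹ by positivity) hinv1 hinv2
    refine h1.trans ?_
    have h2 : |Z⁻¹ - (ZN N)⁻¹| ≤ |Z - ZN N| / z₀ ^ 2 := by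
      have hZne : Z ≠ 0 := hZpos.ne'
      have hZNne : ZN N ≠ 0 := (hZNpos N).ne'
      have heq : Z⁻¹ - (ZN N)⁻¹ = (ZN N - Z) / (Z * ZN N) := by
        field_simp
      have hmulpos : (0:ℝ) < Z * ZN N := mul_pos hZpos (hZNpos N)
      rw [heq, abs_div, abs_of_pos hmulpos, abs_sub_comm]
      rw [div_le_div_iff₀ hmulpos (by positivity : (0:ℝ) < z₀ ^ 2)]
      have hden : z₀ ^ 2 ≤ Z * ZN N := by nlinarith [hZge, hZNge N, hz₀]
      exact mul_le_mul_of_nonneg_left hden (abs_nonneg _)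
    calc |Z⁻¹ - (ZN N)⁻¹| / (2 * Real.sqrt Zmax⁻¹)
        ≤ (|Z - ZN N| / z₀ ^ 2) / (2 * Real.sqrt Zmax⁻¹) := by gcongr
      _ ≤ ((K₁ * Real.exp (-M) * A₂ * ψ N) / z₀ ^ 2) / (2 * Real.sqrt Zmax⁻¹) := by
          gcongr
          exact hZdiff N
      _ = cD * ψ N := by rw [hcDdef]; field_simp
  -- the main constant
  set Cc : ℝ := 2 * z₀⁻¹ * ((1/4) * K₁ ^ 2 * Real.exp (-M)) * A₃ +
      2 * cD ^ 2 * Real.exp (-M) * A₁ with hCcdef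
  have hCcpos : 0 < Cc := by positivity
  refine ⟨max (Real.sqrt ((1/2) * Cc)) 1, lt_of_lt_of_le one_pos (le_max_right _ _), fun N => ?_⟩
  -- the Hellinger integrand and its dominating function
  set F : X → ℝ := fun θ =>
    (Real.sqrt (Z⁻¹ * Real.exp (-Φ θ)) - Real.sqrt ((ZN N)⁻¹ * Real.exp (-Φt N θ))) ^ 2
    with hFdef
  set c1 : ℝ := 2 * z₀⁻¹ * ((1/4) * K₁ ^ 2 * Real.exp (-M) * ψ N ^ 2) with hc1def
  set c2 : ℝ := 2 * (cD * ψ N) ^ 2 * Real.exp (-M) with hc2def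
  set G : X → ℝ := fun θ =>
    c1 * Real.exp (3 * ε * ‖θ‖ ^ 2) + c2 * Real.exp (ε * ‖θ‖ ^ 2) with hGdef
  have hc1nn : 0 ≤ c1 := by positivity
  have hc2nn : 0 ≤ c2 := by positivity
  have hFG : ∀ θ, F θ ≤ G θ := by
    intro θ
    have hsZeq : Real.sqrt (Z⁻¹ * Real.exp (-Φ θ)) =
        Real.sqrt Z⁻¹ * Real.exp (-Φ θ / 2) := by
      rw [Real.sqrt_mul (by positivity), ← Real.exp_half]
    have hsZNeq : Real.sqrt ((ZN N)⁻¹ * Real.exp (-Φt N θ)) =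
        Real.sqrt (ZN N)⁻¹ * Real.exp (-Φt N θ / 2) := by
      rw [Real.sqrt_mul (by positivity), ← Real.exp_half]
    set u : ℝ := Real.exp (-Φ θ / 2) with hudef
    set v : ℝ := Real.exp (-Φt N θ / 2) with hvdef
    set sZ : ℝ := Real.sqrt Z⁻¹ with hsZdef
    set sZN : ℝ := Real.sqrt (ZN N)⁻¹ with hsZNdef
    have hsplit : F θ ≤ 2 * sZ ^ 2 * (u - v) ^ 2 + 2 * (sZ - sZN) ^ 2 * v ^ 2 := by
      rw [hFdef]
      simp only [hsZeq, hsZNeq]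
      nlinarith [sq_nonneg (sZ * (u - v) - (sZ - sZN) * v)]
    -- bound (u - v)^2
    have huv : (u - v) ^ 2 ≤
        (1/4) * K₁ ^ 2 * Real.exp (-M) * ψ N ^ 2 * Real.exp (3 * ε * ‖θ‖ ^ 2) := by
      have hlip := stmt7_exp_lipschitz (-Φ θ / 2) (-Φt N θ / 2)
      have hmax : max (-Φ θ / 2) (-Φt N θ / 2) ≤ (ε * ‖θ‖ ^ 2 - M) / 2 :=
        max_le (by linarith [(hM θ).1]) (by linarith [(hM θ).2 N])
      have habs : |(-Φ θ / 2) - (-Φt N θ / 2)| = (1/2) * |Φ θ - Φt N θ| := by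
        rw [show (-Φ θ / 2) - (-Φt N θ / 2) = (-(1:ℝ)/2) * (Φ θ - Φt N θ) by ring, abs_mul]
        norm_num
      have h2 : |u - v| ≤ (1/2) * K₁ * ψ N * Real.exp ((3 * ε * ‖θ‖ ^ 2 - M) / 2) := by
        calc |u - v| ≤ Real.exp (max (-Φ θ / 2) (-Φt N θ / 2)) *
              |(-Φ θ / 2) - (-Φt N θ / 2)| := hlip
          _ ≤ Real.exp ((ε * ‖θ‖ ^ 2 - M) / 2) *
              ((1/2) * (K₁ * Real.exp (ε * ‖θ‖ ^ 2) * ψ N)) := by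
              rw [habs]
              refine mul_le_mul (Real.exp_le_exp.2 hmax) ?_ (by positivity) (Real.exp_pos _).le
              have := hK N θ
              linarith
          _ = (1/2) * K₁ * ψ N * Real.exp ((3 * ε * ‖θ‖ ^ 2 - M) / 2) := by
              rw [show (3 * ε * ‖θ‖ ^ 2 - M) / 2 = (ε * ‖θ‖ ^ 2 - M) / 2 + ε * ‖θ‖ ^ 2
                by ring, Real.exp_add]
              ring
      have h3 : (u - v) ^ 2 ≤ ((1/2) * K₁ * ψ N * Real.exp ((3 * ε * ‖θ‖ ^ 2 - M) / 2)) ^ 2 := by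
        rw [← sq_abs (u - v)]
        exact pow_le_pow_left₀ (abs_nonneg _) h2 2
      refine h3.trans (le_of_eq ?_)
      rw [mul_pow, mul_pow, mul_pow, stmt7_exp_sq,
        show (2:ℝ) * ((3 * ε * ‖θ‖ ^ 2 - M) / 2) = 3 * ε * ‖θ‖ ^ 2 + (-M) by ring,
        Real.exp_add]
      ring
    -- bound v^2 and sZ^2
    have hv2 : v ^ 2 ≤ Real.exp (-M) * Real.exp (ε * ‖θ‖ ^ 2) := by
      rw [hvdef, stmt7_exp_sq, show (2:ℝ) * (-Φt N θ / 2) = -Φt N θ by ring]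
      exact hexpΦt N θ
    have hsZ2 : sZ ^ 2 ≤ z₀⁻¹ := by
      rw [hsZdef, Real.sq_sqrt (by positivity : (0:ℝ) ≤ Z⁻¹)]
      exact inv_anti₀ hz₀ hZge
    have hDiff2 : (sZ - sZN) ^ 2 ≤ (cD * ψ N) ^ 2 := by
      rw [← sq_abs (sZ - sZN)]
      exact pow_le_pow_left₀ (abs_nonneg _) (hD N) 2
    calc F θ ≤ 2 * sZ ^ 2 * (u - v) ^ 2 + 2 * (sZ - sZN) ^ 2 * v ^ 2 := hsplit
      _ ≤ 2 * z₀⁻¹ * ((1/4) * K₁ ^ 2 * Real.exp (-M) * ψ N ^ 2 *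
            Real.exp (3 * ε * ‖θ‖ ^ 2)) +
          2 * (cD * ψ N) ^ 2 * (Real.exp (-M) * Real.exp (ε * ‖θ‖ ^ 2)) := by
          gcongr <;> positivity
      _ = G θ := by rw [hGdef, hc1def, hc2def]; ring
  -- integrability of F and G
  have hIG : Integrable G μpr := (hg3.const_mul c1).add (hg1.const_mul c2)
  have hFnn : ∀ θ, 0 ≤ F θ := fun θ => sq_nonneg _
  have hFm : Measurable F := by
    apply Measurable.pow_const
    exact (Real.continuous_sqrt.measurable.comp
        (measurable_const.mul hΦm.neg.exp)).sub
      (Real.continuous_sqrt.measurable.comp (measurable_const.mul (hΦtm N).neg.exp))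
  have hIF : Integrable F μpr := by
    refine hIG.mono' hFm.aestronglyMeasurable (ae_of_all _ fun θ => ?_)
    rw [Real.norm_eq_abs, abs_of_nonneg (hFnn θ)]
    exact hFG θ
  -- integrate
  have hintF : ∫ θ, F θ ∂μpr ≤ Cc * ψ N ^ 2 := by
    have h1 := integral_mono hIF hIG hFG
    have h2 : ∫ θ, G θ ∂μpr = c1 * A₃ + c2 * A₁ := by
      rw [hGdef]
      rw [integral_add (hg3.const_mul c1) (hg1.const_mul c2),
        integral_const_mul, integral_const_mul]
    rw [h2] at h1
    refine h1.trans (le_of_eq ?_)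
    rw [hc1def, hc2def, hCcdef]
    ring
  -- conclude
  have final : Real.sqrt ((1/2) * ∫ θ, F θ ∂μpr) ≤
      max (Real.sqrt ((1/2) * Cc)) 1 * ψ N := by
    calc Real.sqrt ((1/2) * ∫ θ, F θ ∂μpr)
        ≤ Real.sqrt ((1/2) * (Cc * ψ N ^ 2)) := Real.sqrt_le_sqrt
            (mul_le_mul_of_nonneg_left hintF (by norm_num))
      _ = Real.sqrt ((1/2) * Cc) * ψ N := by
          rw [show (1/2 : ℝ) * (Cc * ψ N ^ 2) = ((1/2) * Cc) * ψ N ^ 2 by ring,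
            Real.sqrt_mul (by positivity), Real.sqrt_sq (hψ0 N)]
      _ ≤ max (Real.sqrt ((1/2) * Cc)) 1 * ψ N :=
          mul_le_mul_of_nonneg_right (le_max_left _ _) (hψ0 N)
  exact final
end

section
/- Let X be a separable Banach space with Borel σ-algebra, μ_pr a probability measure on X, and let Φ, Φ̃_N : X → ℝ (N ∈ ℕ) be measurable functions satisfying: (i) for every ε > 0 there exists M = M(ε) ∈ ℝ such that Φ(θ) ≥ M − ε‖θ‖² and Φ̃_N(θ) ≥ M − ε‖θ‖² for all θ ∈ X and all N; (ii) for every ε > 0 there exists K₁ = K₁(ε) > 0 such that |Φ(θ) − Φ̃_N(θ)| ≤ K₁ exp(ε‖θ‖²) ψ(N) for all θ ∈ X and all N, where ψ(N) → 0; (iii) there exists ε₀ > 0 such that ∫_X exp(ε‖θ‖²) dμ_pr(θ) < ∞ for all ε ∈ (0, ε₀). With Z = ∫ exp(−Φ) dμ_pr, Z̃_N = ∫ exp(−Φ̃_N) dμ_pr, μ = Z^{−1} e^{−Φ}·μ_pr and μ̃_N = Z̃_N^{−1} e^{−Φ̃_N}·μ_pr, there exists a constant C > 0, independent of N, such that the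 total variation distance satisfies d_TV(μ, μ̃_N) := ½ ∫_X | Z^{−1} e^{−Φ(θ)} − Z̃_N^{−1} e^{−Φ̃_N(θ)} | dμ_pr(θ) ≤ √2 · C · ψ(N). -/
open MeasureTheory Real Filter Topology

lemma exp_neg_sub_exp_neg_abs_le (a b : ℝ) :
    |Real.exp (-a) - Real.exp (-b)| ≤ Real.exp (-(min a b)) * |a - b| := by
  wlog h : a ≤ b generalizing a b
  · rw [abs_sub_comm, abs_sub_comm a b, min_comm]
    exact this b a (le_of_not_ge h)
  · rw [min_eq_left h]
    have h1 : Real.exp (-b) ≤ Real.exp (-a) := Real.exp_le_exp.2 (neg_le_neg h)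
    rw [abs_of_nonneg (sub_nonneg.2 h1), abs_of_nonpos (sub_nonpos.2 h)]
    have hb : Real.exp (-b) = Real.exp (-a) * Real.exp (a - b) := by
      rw [← Real.exp_add]; ring_nf
    rw [hb]
    have h2 : (a - b) + 1 ≤ Real.exp (a - b) := Real.add_one_le_exp _
    nlinarith [Real.exp_pos (-a)]

/-- **Stuart's approximation theorem, total variation bound.** Under the
same hypotheses as Statement 7, the total variation distance between the posteriors
`μ = Z⁻¹ e^{−Φ}·μ_pr` and `μ̃_N = Z̃_N⁻¹ e^{−Φ̃_N}·μ_pr` satisfies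
`d_TV(μ, μ̃_N) = ½∫|Z⁻¹e^{−Φ} − Z̃_N⁻¹e^{−Φ̃_N}| dμ_pr ≤ √2 · C · ψ(N)` with `C`
independent of `N`. -/
theorem stmt_8 {X : Type*} [NormedAddCommGroup X] [NormedSpace ℝ X] [CompleteSpace X]
    [TopologicalSpace.SeparableSpace X] [MeasurableSpace X] [BorelSpace X]
    (μpr : Measure X) [IsProbabilityMeasure μpr]
    (Φ : X → ℝ) (Φt : ℕ → X → ℝ)
    (hΦm : Measurable Φ) (hΦtm : ∀ N, Measurable (Φt N))
    (ψ : ℕ → ℝ) (hψ0 : ∀ N, 0 ≤ ψ N) (hψ : Tendsto ψ atTop (𝓝 0))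
    (hlow : ∀ ε : ℝ, 0 < ε → ∃ M : ℝ, ∀ θ : X,
      M - ε * ‖θ‖ ^ 2 ≤ Φ θ ∧ ∀ N, M - ε * ‖θ‖ ^ 2 ≤ Φt N θ)
    (happrox : ∀ ε : ℝ, 0 < ε → ∃ K₁ : ℝ, 0 < K₁ ∧ ∀ N, ∀ θ : X,
      |Φ θ - Φt N θ| ≤ K₁ * Real.exp (ε * ‖θ‖ ^ 2) * ψ N)
    (hint : ∃ ε₀ : ℝ, 0 < ε₀ ∧ ∀ ε : ℝ, 0 < ε → ε < ε₀ →
      Integrable (fun θ => Real.exp (ε * ‖θ‖ ^ 2)) μpr) :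
    ∃ C : ℝ, 0 < C ∧ ∀ N,
      (1 / 2) * ∫ θ,
          |(∫ t, Real.exp (-Φ t) ∂μpr)⁻¹ * Real.exp (-Φ θ) -
           (∫ t, Real.exp (-Φt N t) ∂μpr)⁻¹ * Real.exp (-Φt N θ)| ∂μpr
        ≤ Real.sqrt 2 * C * ψ N := by
  classical
  obtain ⟨ε₀, hε₀, hintg⟩ := hint
  set ε : ℝ := ε₀ / 4 with hεdef
  set e2 : ℝ := ε₀ / 2 with he2def
  have hεpos : 0 < ε := by positivity
  have he2pos : 0 < e2 := by positivity
  have hIε : Integrable (fun θ => Real.exp (ε * ‖θ‖ ^ 2)) μpr :=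
    hintg ε hεpos (by rw [hεdef]; linarith)
  have hIe2 : Integrable (fun θ => Real.exp (e2 * ‖θ‖ ^ 2)) μpr :=
    hintg e2 he2pos (by rw [he2def]; linarith)
  obtain ⟨M, hM⟩ := hlow ε hεpos
  obtain ⟨K₁, hK₁, hK⟩ := happrox ε hεpos
  -- integrability of e^{-Φ} and e^{-Φt N}
  have hboundInt : Integrable (fun θ => Real.exp (-M) * Real.exp (ε * ‖θ‖ ^ 2)) μpr :=
    hIε.const_mul _
  have hIf : Integrable (fun θ => Real.exp (-Φ θ)) μpr := by
    refine hboundInt.mono' ((hΦm.neg).exp.aestronglyMeasurable) (ae_of_all _ fun θ => ?_)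
    rw [Real.norm_eq_abs, abs_of_pos (Real.exp_pos _), ← Real.exp_add]
    exact Real.exp_le_exp.2 (by have := (hM θ).1; linarith)
  have hIg : ∀ N, Integrable (fun θ => Real.exp (-Φt N θ)) μpr := by
    intro N
    refine hboundInt.mono' (((hΦtm N).neg).exp.aestronglyMeasurable) (ae_of_all _ fun θ => ?_)
    rw [Real.norm_eq_abs, abs_of_pos (Real.exp_pos _), ← Real.exp_add]
    exact Real.exp_le_exp.2 (by have := (hM θ).2 N; linarith)
  -- normalization constants
  set Z : ℝ := ∫ t, Real.exp (-Φ t) ∂μpr with hZdef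
  have hZpos : 0 < Z := by
    rw [hZdef]
    rw [integral_pos_iff_support_of_nonneg (fun θ => (Real.exp_pos _).le) hIf]
    have : Function.support (fun θ : X => Real.exp (-Φ θ)) = Set.univ := by
      ext θ; simp [Function.support, (Real.exp_pos _).ne']
    rw [this]
    simp
  have hZNpos : ∀ N, 0 < ∫ t, Real.exp (-Φt N t) ∂μpr := by
    intro N
    rw [integral_pos_iff_support_of_nonneg (fun θ => (Real.exp_pos _).le) (hIg N)]
    have : Function.support (fun θ : X => Real.exp (-Φt N θ)) = Set.univ := by
      ext θ; simp [Function.support, (Real.exp_pos _).ne']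
    rw [this]
    simp
  -- the key pointwise bound
  set B2 : ℝ := ∫ θ, Real.exp (e2 * ‖θ‖ ^ 2) ∂μpr with hB2def
  have hB2 : 1 ≤ B2 := by
    have h1 : (1 : ℝ) = ∫ _θ, (1 : ℝ) ∂μpr := by simp
    rw [hB2def, h1]
    exact integral_mono (integrable_const 1) hIe2
      (fun θ => Real.one_le_exp (by positivity))
  set C' : ℝ := Real.exp (-M) * K₁ * B2 with hC'def
  have hC'pos : 0 < C' := by
    have : (0:ℝ) < B2 := lt_of_lt_of_le one_pos hB2
    positivity
  have hptw : ∀ N θ, |Real.exp (-Φ θ) - Real.exp (-Φt N θ)| ≤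
      (Real.exp (-M) * K₁ * ψ N) * Real.exp (e2 * ‖θ‖ ^ 2) := by
    intro N θ
    have h1 := exp_neg_sub_exp_neg_abs_le (Φ θ) (Φt N θ)
    have hmin : M - ε * ‖θ‖ ^ 2 ≤ min (Φ θ) (Φt N θ) :=
      le_min (hM θ).1 ((hM θ).2 N)
    have h2 : Real.exp (-(min (Φ θ) (Φt N θ))) ≤ Real.exp (ε * ‖θ‖ ^ 2 - M) :=
      Real.exp_le_exp.2 (by linarith)
    have h3 := hK N θ
    calc |Real.exp (-Φ θ) - Real.exp (-Φt N θ)|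
        ≤ Real.exp (-(min (Φ θ) (Φt N θ))) * |Φ θ - Φt N θ| := h1
      _ ≤ Real.exp (ε * ‖θ‖ ^ 2 - M) * (K₁ * Real.exp (ε * ‖θ‖ ^ 2) * ψ N) := by
          apply mul_le_mul h2 h3 (abs_nonneg _) (Real.exp_pos _).le
      _ = (Real.exp (-M) * K₁ * ψ N) * Real.exp (e2 * ‖θ‖ ^ 2) := by
          have he : Real.exp (ε * ‖θ‖ ^ 2 - M) * Real.exp (ε * ‖θ‖ ^ 2) =
              Real.exp (-M) * Real.exp (e2 * ‖θ‖ ^ 2) := by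
            rw [← Real.exp_add, ← Real.exp_add]
            congr 1
            rw [hεdef, he2def]; ring
          linear_combination (K₁ * ψ N) * he
  have hIdiff : ∀ N, Integrable (fun θ => |Real.exp (-Φ θ) - Real.exp (-Φt N θ)|) μpr :=
    fun N => ((hIf.sub (hIg N)).abs)
  have hintdiff : ∀ N, (∫ θ, |Real.exp (-Φ θ) - Real.exp (-Φt N θ)| ∂μpr) ≤ C' * ψ N := by
    intro N
    calc (∫ θ, |Real.exp (-Φ θ) - Real.exp (-Φt N θ)| ∂μpr)
        ≤ ∫ θ, (Real.exp (-M) * K₁ * ψ N) * Real.exp (e2 * ‖θ‖ ^ 2) ∂μpr :=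
          integral_mono (hIdiff N) (hIe2.const_mul _) (hptw N)
      _ = (Real.exp (-M) * K₁ * ψ N) * B2 := by rw [integral_const_mul]
      _ = C' * ψ N := by rw [hC'def]; ring
  have hZdiffN : ∀ N, |(∫ t, Real.exp (-Φt N t) ∂μpr) - Z| ≤ C' * ψ N := by
    intro N
    rw [abs_sub_comm, hZdef, ← integral_sub hIf (hIg N)]
    calc |∫ θ, (Real.exp (-Φ θ) - Real.exp (-Φt N θ)) ∂μpr|
        ≤ ∫ θ, |Real.exp (-Φ θ) - Real.exp (-Φt N θ)| ∂μpr := by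
          simpa [Real.norm_eq_abs] using
            norm_integral_le_integral_norm (μ := μpr)
              (f := fun θ => Real.exp (-Φ θ) - Real.exp (-Φt N θ))
      _ ≤ C' * ψ N := hintdiff N
  refine ⟨C' / Z, by positivity, fun N => ?_⟩
  set ZN : ℝ := ∫ t, Real.exp (-Φt N t) ∂μpr with hZNdef
  have hZN0 : 0 < ZN := hZNpos N
  have hptw2 : ∀ θ, |Z⁻¹ * Real.exp (-Φ θ) - ZN⁻¹ * Real.exp (-Φt N θ)| ≤
      Z⁻¹ * |Real.exp (-Φ θ) - Real.exp (-Φt N θ)| + |Z⁻¹ - ZN⁻¹| * Real.exp (-Φt N θ) := by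
    intro θ
    have heq : Z⁻¹ * Real.exp (-Φ θ) - ZN⁻¹ * Real.exp (-Φt N θ) =
        Z⁻¹ * (Real.exp (-Φ θ) - Real.exp (-Φt N θ)) + (Z⁻¹ - ZN⁻¹) * Real.exp (-Φt N θ) := by
      ring
    rw [heq]
    calc |Z⁻¹ * (Real.exp (-Φ θ) - Real.exp (-Φt N θ)) + (Z⁻¹ - ZN⁻¹) * Real.exp (-Φt N θ)|
        ≤ |Z⁻¹ * (Real.exp (-Φ θ) - Real.exp (-Φt N θ))| + |(Z⁻¹ - ZN⁻¹) * Real.exp (-Φt N θ)| :=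
          abs_add_le _ _
      _ = Z⁻¹ * |Real.exp (-Φ θ) - Real.exp (-Φt N θ)| + |Z⁻¹ - ZN⁻¹| * Real.exp (-Φt N θ) := by
          rw [abs_mul, abs_mul, abs_of_pos (inv_pos.2 hZpos),
            abs_of_pos (Real.exp_pos (-Φt N θ))]
  have hIlhs : Integrable
      (fun θ => |Z⁻¹ * Real.exp (-Φ θ) - ZN⁻¹ * Real.exp (-Φt N θ)|) μpr :=
    ((hIf.const_mul Z⁻¹).sub ((hIg N).const_mul ZN⁻¹)).abs
  have h1 : (∫ θ, |Z⁻¹ * Real.exp (-Φ θ) - ZN⁻¹ * Real.exp (-Φt N θ)| ∂μpr) ≤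
      Z⁻¹ * (∫ θ, |Real.exp (-Φ θ) - Real.exp (-Φt N θ)| ∂μpr) + |Z⁻¹ - ZN⁻¹| * ZN := by
    calc (∫ θ, |Z⁻¹ * Real.exp (-Φ θ) - ZN⁻¹ * Real.exp (-Φt N θ)| ∂μpr)
        ≤ ∫ θ, (Z⁻¹ * |Real.exp (-Φ θ) - Real.exp (-Φt N θ)| +
            |Z⁻¹ - ZN⁻¹| * Real.exp (-Φt N θ)) ∂μpr :=
          integral_mono hIlhs (((hIdiff N).const_mul _).add ((hIg N).const_mul _)) hptw2
      _ = Z⁻¹ * (∫ θ, |Real.exp (-Φ θ) - Real.exp (-Φt N θ)| ∂μpr) + |Z⁻¹ - ZN⁻¹| * ZN := by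
          rw [integral_add ((hIdiff N).const_mul _) ((hIg N).const_mul _),
            integral_const_mul, integral_const_mul]
  have h2 : |Z⁻¹ - ZN⁻¹| * ZN = |ZN - Z| / Z := by
    have hd : Z⁻¹ - ZN⁻¹ = (ZN - Z) / (Z * ZN) := by
      field_simp
    rw [hd, abs_div, abs_of_pos (mul_pos hZpos hZN0)]
    field_simp
  have h3 : |Z⁻¹ - ZN⁻¹| * ZN ≤ C' * ψ N / Z := by
    rw [h2, div_le_div_iff₀ hZpos hZpos]
    nlinarith [hZdiffN N]
  have h4 : Z⁻¹ * (∫ θ, |Real.exp (-Φ θ) - Real.exp (-Φt N θ)| ∂μpr) ≤ C' * ψ N / Z := by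
    rw [div_eq_inv_mul]
    exact mul_le_mul_of_nonneg_left (hintdiff N) (inv_nonneg.2 hZpos.le)
  have hsqrt : (1 : ℝ) ≤ Real.sqrt 2 := by
    rw [show (1:ℝ) = Real.sqrt 1 from (Real.sqrt_one).symm]
    exact Real.sqrt_le_sqrt (by norm_num)
  have hCψ : 0 ≤ C' / Z * ψ N := mul_nonneg (by positivity) (hψ0 N)
  calc (1 / 2) * ∫ θ, |Z⁻¹ * Real.exp (-Φ θ) - ZN⁻¹ * Real.exp (-Φt N θ)| ∂μpr
      ≤ (1 / 2) * (C' * ψ N / Z + C' * ψ N / Z) := by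
        have := le_trans h1 (add_le_add h4 h3)
        linarith
    _ = C' / Z * ψ N := by ring
    _ ≤ Real.sqrt 2 * (C' / Z) * ψ N := by nlinarith
end
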